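/- arXiv:1405.3000 — 3 statements merged into one kernel-verified Lean document; each statement's English description precedes it below -/
import Mathlib

section
/- If S is a Gaussian R-algebra and T is a Gaussian S-algebra, then T is a Gaussian R-algebra. -/
/-- The Ohm-Rush content of an element `f` of the `R`-algebra `S`:
the intersection of all ideals `I` of `R` such that `f ∈ IS`. -/
def orc (R S : Type*) [CommRing R] [CommRing S] [Algebra R S] (f : S) : Ideal R :=
  sInf {I : Ideal R | f ∈ I.map (algebraMap R S)}

/-- `S` is an Ohm-Rush `R`-algebra if `f ∈ orc(f)·S` for every `f ∈ S`. -/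
def IsOhmRushAlgebra (R S : Type*) [CommRing R] [CommRing S] [Algebra R S] : Prop :=
  ∀ f : S, f ∈ (orc R S f).map (algebraMap R S)

/-- `S` is a content `R`-algebra if it is a faithfully flat Ohm-Rush `R`-algebra
satisfying the Dedekind–Mertens condition. -/
def IsContentAlgebra (R S : Type*) [CommRing R] [CommRing S] [Algebra R S] : Prop :=
  Module.FaithfullyFlat R S ∧ IsOhmRushAlgebra R S ∧
    ∀ f g : S, ∃ n : ℕ, 1 ≤ n ∧
      orc R S f ^ n * orc R S g = orc R S f ^ (n - 1) * orc R S (f * g)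

/-- `S` is a semicontent `R`-algebra if it is a faithfully flat Ohm-Rush `R`-algebra and
for every multiplicatively closed subset `W ⊆ R` and all `f, g ∈ S` with `orc(f)·R_W = R_W`,
one has `orc(fg)·R_W = orc(g)·R_W`. -/
def IsSemicontentAlgebra (R S : Type*) [CommRing R] [CommRing S] [Algebra R S] : Prop :=
  Module.FaithfullyFlat R S ∧ IsOhmRushAlgebra R S ∧
    ∀ (W : Submonoid R) (f g : S),
      (orc R S f).map (algebraMap R (Localization W)) = ⊤ →
      (orc R S (f * g)).map (algebraMap R (Localization W)) =
        (orc R S g).map (algebraMap R (Localization W))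

/-- `S` is a weak content `R`-algebra if it is an Ohm-Rush `R`-algebra and
`orc(f)·orc(g) ⊆ √(orc(fg))` for all `f, g ∈ S`. -/
def IsWeakContentAlgebra (R S : Type*) [CommRing R] [CommRing S] [Algebra R S] : Prop :=
  IsOhmRushAlgebra R S ∧
    ∀ f g : S, orc R S f * orc R S g ≤ (orc R S (f * g)).radical

/-- `S` is a Gaussian `R`-algebra if it is an Ohm-Rush `R`-algebra and
`orc(fg) = orc(f)·orc(g)` for all `f, g ∈ S`. -/
def IsGaussianAlgebra (R S : Type*) [CommRing R] [CommRing S] [Algebra R S] : Prop :=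
  IsOhmRushAlgebra R S ∧ ∀ f g : S, orc R S (f * g) = orc R S f * orc R S g

/-!
For `f ∈ T`, the Ohm-Rush property of `T` over `S` and of `S` over `R` gives the tower formula
`orc_R(f) = c(orc_S(f))`, where `c(J) := ⨆_{s ∈ J} orc_R(s)` is the content of an ideal `J` of `S`.
Since `S` is Gaussian, `c` is multiplicative on ideals (`c` is additive because `S` is Ohm-Rush),
so `orc_R(fg) = c(orc_S(f) orc_S(g)) = c(orc_S(f)) c(orc_S(g)) = orc_R(f) orc_R(g)`.
-/

section Content

variable {R S : Type*} [CommRing R] [CommRing S] [Algebra R S]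

theorem orc_le_of_mem_map {I : Ideal R} {f : S} (h : f ∈ I.map (algebraMap R S)) :
    orc R S f ≤ I :=
  sInf_le h

theorem IsOhmRushAlgebra.orc_le_iff (hS : IsOhmRushAlgebra R S) {I : Ideal R} {f : S} :
    orc R S f ≤ I ↔ f ∈ I.map (algebraMap R S) :=
  ⟨fun h ↦ Ideal.map_mono h (hS f), orc_le_of_mem_map⟩

theorem IsOhmRushAlgebra.orc_add_le (hS : IsOhmRushAlgebra R S) (a b : S) :
    orc R S (a + b) ≤ orc R S a ⊔ orc R S b :=
  orc_le_of_mem_map <|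
    add_mem (Ideal.map_mono le_sup_left (hS a)) (Ideal.map_mono le_sup_right (hS b))

variable (R) in
def orcIdeal (J : Ideal S) : Ideal R :=
  ⨆ s ∈ J, orc R S s

theorem orc_le_orcIdeal {J : Ideal S} {s : S} (hs : s ∈ J) : orc R S s ≤ orcIdeal R J :=
  le_iSup₂ (f := fun s _ ↦ orc R S s) s hs

theorem IsGaussianAlgebra.orcIdeal_mul (hS : IsGaussianAlgebra R S) (J K : Ideal S) :
    orcIdeal R (J * K) = orcIdeal R J * orcIdeal R K := by
  refine le_antisymm (iSup₂_le fun x hx ↦ ?_) ?_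
  · refine Submodule.mul_induction_on hx (fun j hj k hk ↦ ?_) fun a b ha hb ↦ ?_
    · rw [hS.2 j k]
      exact Ideal.mul_mono (orc_le_orcIdeal hj) (orc_le_orcIdeal hk)
    · exact (hS.1.orc_add_le a b).trans (sup_le ha hb)
  · simp only [orcIdeal, Submodule.iSup_mul, Submodule.mul_iSup]
    refine iSup₂_le fun k hk ↦ iSup₂_le fun j hj ↦ ?_
    rw [← hS.2 j k]
    exact orc_le_orcIdeal (Ideal.mul_mem_mul hj hk)

end Content

section Tower

variable {R S T : Type*} [CommRing R] [CommRing S] [CommRing T]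
  [Algebra R S] [Algebra S T] [Algebra R T] [IsScalarTower R S T]

theorem mem_map_of_orc_le_map (hT : IsOhmRushAlgebra S T) {I : Ideal R} {f : T}
    (h : orc S T f ≤ I.map (algebraMap R S)) : f ∈ I.map (algebraMap R T) := by
  rw [IsScalarTower.algebraMap_eq R S T, ← Ideal.map_map]
  exact hT.orc_le_iff.1 h

theorem orc_le_orc_of_mem_orc {f : T} {s : S} (hs : s ∈ orc S T f) :
    orc R S s ≤ orc R T f := by
  refine le_sInf fun I hI ↦ orc_le_of_mem_map (orc_le_of_mem_map ?_ hs)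
  rwa [Ideal.map_map, ← IsScalarTower.algebraMap_eq]

theorem IsOhmRushAlgebra.trans (hS : IsOhmRushAlgebra R S) (hT : IsOhmRushAlgebra S T) :
    IsOhmRushAlgebra R T := fun _ ↦
  mem_map_of_orc_le_map hT fun _ hs ↦ hS.orc_le_iff.1 (orc_le_orc_of_mem_orc hs)

theorem orc_eq_orcIdeal_orc (hS : IsOhmRushAlgebra R S) (hT : IsOhmRushAlgebra S T) (f : T) :
    orc R T f = orcIdeal R (orc S T f) :=
  le_antisymm
    (orc_le_of_mem_map <| mem_map_of_orc_le_map hT fun _ hs ↦ hS.orc_le_iff.1 (orc_le_orcIdeal hs))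
    (iSup₂_le fun _ hs ↦ orc_le_orc_of_mem_orc hs)

end Tower

/-- Transitivity of the Gaussian algebra property. -/
theorem isGaussianAlgebra_trans (R S T : Type*) [CommRing R] [CommRing S] [CommRing T]
    [Algebra R S] [Algebra S T] [Algebra R T] [IsScalarTower R S T]
    (hS : IsGaussianAlgebra R S) (hT : IsGaussianAlgebra S T) :
    IsGaussianAlgebra R T := by
  refine ⟨hS.1.trans hT.1, fun f g ↦ ?_⟩
  simp only [orc_eq_orcIdeal_orc hS.1 hT.1, hT.2 f g, hS.orcIdeal_mul]
end

section
/- Let V be a valuation domain that is not a field (equivalently, with nontrivial value group G). Then the following are equivalent: (a) V[[X]] is an Ohm-Rush V-algebra; (b) V[[X]] is a Gaussian V-algebra; (c) G is order-isomorphic to the additive group ℝ or to ℤ. -/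
/-!
For a valuation domain `V` with value group `G`, an element `c` of `V` generates the content ideal
of `f ∈ V⟦X⟧` exactly when its value is the infimum of the values of the coefficients of `f`.
Hence `V⟦X⟧` is Ohm-Rush iff every countable subset of `G≥0` has an infimum in `G`. Such a `G` is
archimedean, so it embeds into `ℝ` and is either `ℤ` or densely ordered, and in the dense case the
countable infima force the embedding to be onto.

Conversely, for `G = ℤ` or `ℝ`, Gauss's lemma for power series is proved by tilting the values of
the coefficients by a generic small slope: the minima of `v(fᵢ) + s·i` and `v(gⱼ) + s·j` are then
attained at unique indices `i₀`, `j₀`, so the coefficient of `X^(i₀ + j₀)` in `fg` is dominated by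
the single term `f_{i₀} g_{j₀}`, whose value is as close to `v(c(f)) + v(c(g))` as we like.
-/

open PowerSeries Filter

structure IsDvdValuation {V Γ : Type*} [CommRing V] [AddCommGroup Γ] [LinearOrder Γ]
    (w : V → Γ) : Prop where
  map_mul {a b : V} : a ≠ 0 → b ≠ 0 → w (a * b) = w a + w b
  dvd_iff_le {a b : V} : a ≠ 0 → b ≠ 0 → (a ∣ b ↔ w a ≤ w b)

def coeffVals {V Γ : Type*} [CommRing V] (w : V → Γ) (f : V⟦X⟧) : Set Γ :=
  (fun n => w (coeff n f)) '' {n | coeff n f ≠ 0}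

namespace IsDvdValuation

variable {V Γ : Type*} [CommRing V] [AddCommGroup Γ] [LinearOrder Γ] {w : V → Γ}

theorem comp {Γ' : Type*} [AddCommGroup Γ'] [LinearOrder Γ'] (hw : IsDvdValuation w)
    {ι : Γ →+ Γ'} (hι : StrictMono ι) : IsDvdValuation (ι ∘ w) where
  map_mul ha hb := by simp [hw.map_mul ha hb]
  dvd_iff_le ha hb := (hw.dvd_iff_le ha hb).trans hι.le_iff_le.symm

theorem map_eq_of_associated [IsDomain V] (hw : IsDvdValuation w) {x y : V} (h : Associated x y)
    (hx : x ≠ 0) : w x = w y := by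
  have hy : y ≠ 0 := h.ne_zero_iff.1 hx
  exact le_antisymm ((hw.dvd_iff_le hx hy).1 h.dvd) ((hw.dvd_iff_le hy hx).1 h.dvd')

variable [IsOrderedAddMonoid Γ]

theorem map_one [Nontrivial V] (hw : IsDvdValuation w) : w 1 = 0 := by
  simpa using hw.map_mul (one_ne_zero (α := V)) one_ne_zero

theorem nonneg [Nontrivial V] (hw : IsDvdValuation w) {a : V} (ha : a ≠ 0) : 0 ≤ w a := by
  simpa [hw.map_one] using (hw.dvd_iff_le one_ne_zero ha).1 (one_dvd a)

theorem isUnit_iff [Nontrivial V] (hw : IsDvdValuation w) {a : V} (ha : a ≠ 0) :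
    IsUnit a ↔ w a = 0 := by
  rw [isUnit_iff_dvd_one, hw.dvd_iff_le ha one_ne_zero, hw.map_one]
  exact ⟨fun h => le_antisymm h (hw.nonneg ha), le_of_eq⟩

theorem bddBelow_coeffVals [Nontrivial V] (hw : IsDvdValuation w) (f : V⟦X⟧) :
    BddBelow (coeffVals w f) :=
  ⟨0, by rintro _ ⟨n, hn, rfl⟩; exact hw.nonneg hn⟩

variable [IsDomain V] [ValuationRing V]

theorem mem_span_mul_maximalIdeal_of_lt (hw : IsDvdValuation w) {x y : V} (hx : x ≠ 0)
    (hy : y ≠ 0) (h : w x < w y) : y ∈ Ideal.span {x} * IsLocalRing.maximalIdeal V := by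
  obtain ⟨z, rfl⟩ := (hw.dvd_iff_le hx hy).2 h.le
  have hz : z ≠ 0 := right_ne_zero_of_mul hy
  rw [hw.map_mul hx hz, lt_add_iff_pos_right] at h
  exact Ideal.mem_span_singleton_mul.2
    ⟨z, (IsLocalRing.mem_maximalIdeal z).2 fun hu => h.ne' ((hw.isUnit_iff hz).1 hu), rfl⟩

theorem exists_pos_of_not_isField (hw : IsDvdValuation w) (hV : ¬IsField V) :
    ∃ a : V, a ≠ 0 ∧ 0 < w a := by
  rw [IsLocalRing.isField_iff_maximalIdeal_eq] at hV
  obtain ⟨a, ha, ha0⟩ := Submodule.exists_mem_ne_zero_of_ne_bot hV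
  refine ⟨a, ha0, (hw.nonneg ha0).lt_of_ne fun h => ?_⟩
  exact (IsLocalRing.mem_maximalIdeal a).1 ha ((hw.isUnit_iff ha0).2 h.symm)

end IsDvdValuation

theorem associated_of_sub_mem_span_mul_maximalIdeal {R : Type*} [CommRing R] [IsLocalRing R]
    {x y : R} (h : y - x ∈ Ideal.span {x} * IsLocalRing.maximalIdeal R) : Associated x y := by
  obtain ⟨m, hm, hxm⟩ := Ideal.mem_span_singleton_mul.1 h
  have hu : IsUnit (1 + m) := by
    simpa using IsLocalRing.isUnit_one_sub_self_of_mem_nonunits (-m)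
      ((IsLocalRing.mem_maximalIdeal _).1 (neg_mem hm))
  exact ⟨hu.unit, by rw [IsUnit.unit_spec, mul_add, mul_one, hxm, add_sub_cancel]⟩

section Content

variable {V : Type*} [CommRing V]

def IsCoeffGcd (f : V⟦X⟧) (c : V) : Prop :=
  (∀ n, c ∣ coeff n f) ∧ ∀ d : V, (∀ n, d ∣ coeff n f) → d ∣ c

theorem isCoeffGcd_zero : IsCoeffGcd (0 : V⟦X⟧) 0 :=
  ⟨fun _ => by simp, fun d _ => dvd_zero d⟩

variable [IsDomain V] [ValuationRing V]

theorem mem_map_algebraMap_powerSeries_iff (I : Ideal V) (f : V⟦X⟧) :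
    f ∈ I.map (algebraMap V V⟦X⟧) ↔ ∃ b ∈ I, ∀ n, b ∣ coeff n f := by
  classical
  constructor
  · intro hf
    -- `f` already lies in the extension of a finitely generated, hence principal, subideal
    obtain ⟨T, hT, hfT⟩ := Submodule.mem_span_finite_of_mem_span hf
    obtain ⟨T', hT'I, rfl⟩ := Finset.subset_set_image_iff.1 hT
    obtain ⟨b, hb⟩ := (IsBezout.isPrincipal_of_FG (Ideal.span (T' : Set V)) ⟨T', rfl⟩).principal
    have hbI : b ∈ I := Ideal.span_le.2 hT'I (hb ▸ Ideal.mem_span_singleton_self b)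
    rw [Finset.coe_image, ← Ideal.span, ← Ideal.map_span, hb, Ideal.submodule_span_eq,
      Ideal.map_span, Set.image_singleton] at hfT
    obtain ⟨a, rfl⟩ := Ideal.mem_span_singleton'.1 hfT
    exact ⟨b, hbI, fun n => ⟨coeff n a, by simp [mul_comm]⟩⟩
  · rintro ⟨b, hb, hdvd⟩
    choose a ha using hdvd
    have hf : f = algebraMap V V⟦X⟧ b * mk a := by
      ext n
      simp [ha n]
    exact hf ▸ Ideal.mul_mem_right _ _ (Ideal.mem_map_of_mem _ hb)

theorem IsCoeffGcd.orc_eq {f : V⟦X⟧} {c : V} (hc : IsCoeffGcd f c) :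
    orc V V⟦X⟧ f = Ideal.span {c} := by
  refine le_antisymm (sInf_le ?_) (le_sInf fun I hI => ?_)
  · exact (mem_map_algebraMap_powerSeries_iff _ _).2 ⟨c, Ideal.mem_span_singleton_self c, hc.1⟩
  · obtain ⟨b, hbI, hb⟩ := (mem_map_algebraMap_powerSeries_iff _ _).1 hI
    obtain ⟨e, rfl⟩ := hc.2 b hb
    exact (Ideal.span_singleton_le_iff_mem _).2 (I.mul_mem_right e hbI)

theorem orc_powerSeries_zero : orc V V⟦X⟧ 0 = ⊥ := by
  rw [isCoeffGcd_zero.orc_eq, Ideal.span_singleton_eq_bot]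

theorem isOhmRushAlgebra_powerSeries_iff :
    IsOhmRushAlgebra V V⟦X⟧ ↔ ∀ f : V⟦X⟧, ∃ c, IsCoeffGcd f c := by
  refine ⟨fun h f => ?_, fun h f => ?_⟩
  · obtain ⟨c, hc, hdvd⟩ := (mem_map_algebraMap_powerSeries_iff _ _).1 (h f)
    refine ⟨c, hdvd, fun d hd => Ideal.mem_span_singleton.1 ?_⟩
    have hle : orc V V⟦X⟧ f ≤ Ideal.span {d} := sInf_le <|
      (mem_map_algebraMap_powerSeries_iff _ _).2 ⟨d, Ideal.mem_span_singleton_self d, hd⟩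
    exact hle hc
  · obtain ⟨c, hc⟩ := h f
    rw [hc.orc_eq]
    exact (mem_map_algebraMap_powerSeries_iff _ _).2 ⟨c, Ideal.mem_span_singleton_self c, hc.1⟩

theorem isGaussianAlgebra_powerSeries_of_isCoeffGcd_mul (hOR : IsOhmRushAlgebra V V⟦X⟧)
    (h : ∀ f g : V⟦X⟧, f ≠ 0 → g ≠ 0 →
      ∃ cf cg, IsCoeffGcd f cf ∧ IsCoeffGcd g cg ∧ IsCoeffGcd (f * g) (cf * cg)) :
    IsGaussianAlgebra V V⟦X⟧ := by
  refine ⟨hOR, fun f g => ?_⟩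
  rcases eq_or_ne f 0 with rfl | hf
  · rw [zero_mul, orc_powerSeries_zero, Ideal.bot_mul]
  rcases eq_or_ne g 0 with rfl | hg
  · rw [mul_zero, orc_powerSeries_zero, Ideal.mul_bot]
  obtain ⟨cf, cg, hcf, hcg, hcfg⟩ := h f g hf hg
  rw [hcfg.orc_eq, hcf.orc_eq, hcg.orc_eq, Ideal.span_singleton_mul_span_singleton]

end Content

theorem countable_setOf_add_mul_eq (A : ℕ → ℝ) :
    {s : ℝ | ∃ i j : ℕ, i ≠ j ∧ A i + s * i = A j + s * j}.Countable := by
  refine (Set.countable_range fun p : ℕ × ℕ => (A p.2 - A p.1) / (p.1 - p.2)).mono ?_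
  rintro s ⟨i, j, hij, h⟩
  have hij' : (i : ℝ) - j ≠ 0 := sub_ne_zero.2 (Nat.cast_injective.ne hij)
  exact ⟨(i, j), by rw [div_eq_iff hij']; linarith⟩

theorem exists_forall_le_add_mul {A : ℕ → ℝ} {P : Set ℕ} (hP : P.Nonempty)
    (hA : BddBelow (A '' P)) {s : ℝ} (hs : 0 < s) :
    ∃ i₀ ∈ P, ∀ i ∈ P, A i₀ + s * i₀ ≤ A i + s * i := by
  obtain ⟨m, hm⟩ := hA
  have : Nonempty P := hP.to_subtype
  have htend : Tendsto (fun i : P => A i + s * i) cofinite atTop := by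
    refine tendsto_atTop_mono (f := fun i : P => m + s * i)
      (fun i => by linarith [hm ⟨i, i.2, rfl⟩]) (tendsto_atTop_add_const_left _ m ?_)
    refine (tendsto_natCast_atTop_atTop.const_mul_atTop hs).comp ?_
    rw [← Nat.cofinite_eq_atTop]
    exact Subtype.val_injective.tendsto_cofinite
  obtain ⟨⟨i₀, hi₀⟩, h⟩ := htend.exists_forall_le
  exact ⟨i₀, hi₀, fun i hi => h ⟨i, hi⟩⟩

theorem exists_near_strict_min_on_antidiagonal {A B : ℕ → ℝ} {P Q : Set ℕ}
    (hA : BddBelow (A '' P)) (hB : BddBelow (B '' Q)) {i₁ j₁ : ℕ} (hi₁ : i₁ ∈ P) (hj₁ : j₁ ∈ Q)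
    {ε : ℝ} (hε : 0 < ε) :
    ∃ i₀ ∈ P, ∃ j₀ ∈ Q, A i₀ + B j₀ < A i₁ + B j₁ + ε ∧
      ∀ i ∈ P, ∀ j ∈ Q, i + j = i₀ + j₀ → i ≠ i₀ → A i₀ + B j₀ < A i + B j := by
  -- a small slope `s` breaking all ties among the `A i + s * i` and among the `B j + s * j`
  obtain ⟨s, hs, hs0, hsε⟩ := ((countable_setOf_add_mul_eq A).union
    (countable_setOf_add_mul_eq B)).dense_compl ℝ |>.exists_between
    (show 0 < ε / (i₁ + j₁ + 1) by positivity)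
  simp only [Set.mem_compl_iff, Set.mem_union, Set.mem_ofPred_eq, not_or, not_exists,
    not_and] at hs
  rw [lt_div_iff₀ (by positivity)] at hsε
  obtain ⟨i₀, hi₀, hAmin⟩ := exists_forall_le_add_mul ⟨i₁, hi₁⟩ hA hs0
  obtain ⟨j₀, hj₀, hBmin⟩ := exists_forall_le_add_mul ⟨j₁, hj₁⟩ hB hs0
  refine ⟨i₀, hi₀, j₀, hj₀, ?_, fun i hi j hj hij hne => ?_⟩
  · have := hAmin i₁ hi₁
    have := hBmin j₁ hj₁
    have : 0 ≤ s * i₀ + s * j₀ := by positivity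
    nlinarith
  · have hA' := (hAmin i hi).lt_of_ne (hs.1 i₀ i (Ne.symm hne))
    have hB' := (hBmin j hj).lt_of_ne (hs.2 j₀ j (by omega))
    have hij' : (i : ℝ) + j = i₀ + j₀ := by exact_mod_cast hij
    nlinarith

namespace IsDvdValuation

variable {V : Type*} [CommRing V] [IsDomain V] {w : V → ℝ}

theorem exists_isCoeffGcd_isGLB (hw : IsDvdValuation w) (hclosed : IsClosed (w '' {a | a ≠ 0}))
    {f : V⟦X⟧} (hf : f ≠ 0) : ∃ c ≠ 0, IsCoeffGcd f c ∧ IsGLB (coeffVals w f) (w c) := by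
  obtain ⟨n₀, hn₀⟩ := exists_coeff_ne_zero_iff_ne_zero.2 hf
  have hne : (coeffVals w f).Nonempty := ⟨_, n₀, hn₀, rfl⟩
  have hglb := isGLB_csInf hne (hw.bddBelow_coeffVals f)
  have hsub : coeffVals w f ⊆ w '' {a | a ≠ 0} := by
    rintro _ ⟨n, hn, rfl⟩
    exact ⟨_, hn, rfl⟩
  obtain ⟨c, hc, hwc⟩ := hclosed.closure_subset_iff.2 hsub (hglb.mem_closure hne)
  rw [← hwc] at hglb
  refine ⟨c, hc, ⟨fun n => ?_, fun d hd => ?_⟩, hglb⟩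
  · by_cases hn : coeff n f = 0
    · simp [hn]
    · exact (hw.dvd_iff_le hc hn).2 (hglb.1 ⟨n, hn, rfl⟩)
  · have hd0 : d ≠ 0 := by
      rintro rfl
      exact hn₀ (zero_dvd_iff.1 (hd n₀))
    refine (hw.dvd_iff_le hd0 hc).2 (hglb.2 ?_)
    rintro _ ⟨n, hn, rfl⟩
    exact (hw.dvd_iff_le hd0 hn).1 (hd n)

variable [ValuationRing V]

theorem exists_coeff_mul_lt (hw : IsDvdValuation w) {f g : V⟦X⟧} {i₁ j₁ : ℕ}
    (hi₁ : coeff i₁ f ≠ 0) (hj₁ : coeff j₁ g ≠ 0) {ε : ℝ} (hε : 0 < ε) :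
    ∃ n, coeff n (f * g) ≠ 0 ∧ w (coeff n (f * g)) < w (coeff i₁ f) + w (coeff j₁ g) + ε := by
  obtain ⟨i₀, hi₀, j₀, hj₀, hlt, hmin⟩ := exists_near_strict_min_on_antidiagonal
    (hw.bddBelow_coeffVals f) (hw.bddBelow_coeffVals g) hi₁ hj₁ hε
  set x := coeff i₀ f * coeff j₀ g
  have hx : x ≠ 0 := mul_ne_zero hi₀ hj₀
  have hrest : coeff (i₀ + j₀) (f * g) - x ∈ Ideal.span {x} * IsLocalRing.maximalIdeal V := by
    rw [coeff_mul, ← Finset.add_sum_erase _ _ (Finset.HasAntidiagonal.mem_antidiagonal.2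
      (rfl : (i₀, j₀).1 + (i₀, j₀).2 = i₀ + j₀)),
      add_sub_cancel_left]
    refine Ideal.sum_mem _ fun p hp => ?_
    obtain ⟨hp_ne, hp⟩ := Finset.mem_erase.1 hp
    rw [Finset.HasAntidiagonal.mem_antidiagonal] at hp
    by_cases hp0 : coeff p.1 f * coeff p.2 g = 0
    · rw [hp0]
      exact zero_mem _
    have hpf := left_ne_zero_of_mul hp0
    have hpg := right_ne_zero_of_mul hp0
    refine hw.mem_span_mul_maximalIdeal_of_lt hx hp0 ?_
    rw [hw.map_mul hi₀ hj₀, hw.map_mul hpf hpg]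
    exact hmin p.1 hpf p.2 hpg hp fun h => hp_ne (Prod.ext h (by omega))
  have hassoc := associated_of_sub_mem_span_mul_maximalIdeal hrest
  refine ⟨i₀ + j₀, hassoc.ne_zero_iff.1 hx, ?_⟩
  rwa [← hw.map_eq_of_associated hassoc hx, hw.map_mul hi₀ hj₀]

theorem le_add_of_forall_dvd_coeff_mul (hw : IsDvdValuation w) {f g : V⟦X⟧} {a b : ℝ}
    (ha : IsGLB (coeffVals w f) a) (hb : IsGLB (coeffVals w g) b) {d : V} (hd0 : d ≠ 0)
    (hd : ∀ n, d ∣ coeff n (f * g)) : w d ≤ a + b := by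
  refine le_of_forall_pos_lt_add fun ε hε => ?_
  have hε3 : 0 < ε / 3 := by positivity
  obtain ⟨_, ⟨i, hi, rfl⟩, hia⟩ := (isGLB_lt_iff ha).1 (lt_add_of_pos_right a hε3)
  obtain ⟨_, ⟨j, hj, rfl⟩, hjb⟩ := (isGLB_lt_iff hb).1 (lt_add_of_pos_right b hε3)
  obtain ⟨n, hn, hlt⟩ := hw.exists_coeff_mul_lt hi hj hε3
  have := (hw.dvd_iff_le hd0 hn).1 (hd n)
  dsimp only at hia hjb
  linarith

theorem isGaussianAlgebra_powerSeries (hw : IsDvdValuation w)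
    (hclosed : IsClosed (w '' {a | a ≠ 0})) : IsGaussianAlgebra V V⟦X⟧ := by
  have hgood := fun f hf => hw.exists_isCoeffGcd_isGLB hclosed (f := f) hf
  refine isGaussianAlgebra_powerSeries_of_isCoeffGcd_mul
    (isOhmRushAlgebra_powerSeries_iff.2 fun f => ?_) fun f g hf hg => ?_
  · rcases eq_or_ne f 0 with rfl | hf
    · exact ⟨0, isCoeffGcd_zero⟩
    · obtain ⟨c, -, hc, -⟩ := hgood f hf
      exact ⟨c, hc⟩
  obtain ⟨cf, hcf0, hcf, hf'⟩ := hgood f hf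
  obtain ⟨cg, hcg0, hcg, hg'⟩ := hgood g hg
  refine ⟨cf, cg, hcf, hcg, fun n => ?_, fun d hd => ?_⟩
  · rw [coeff_mul]
    exact Finset.dvd_sum fun p _ => mul_dvd_mul (hcf.1 p.1) (hcg.1 p.2)
  · have hd0 : d ≠ 0 := by
      rintro rfl
      exact mul_ne_zero hf hg (PowerSeries.ext fun n => zero_dvd_iff.1 (hd n))
    rw [hw.dvd_iff_le hd0 (mul_ne_zero hcf0 hcg0), hw.map_mul hcf0 hcg0]
    exact hw.le_add_of_forall_dvd_coeff_mul hf' hg' hd0 hd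

end IsDvdValuation

section ValueGroup

variable {G : Type*} [AddCommGroup G] [LinearOrder G]

theorem archimedean_of_forall_isGLB [IsOrderedAddMonoid G]
    (h : ∀ s : ℕ → G, (∀ n, 0 ≤ s n) → ∃ g, IsGLB (Set.range s) g) : Archimedean G := by
  refine ⟨fun x y hy => ?_⟩
  by_contra! hxy
  obtain ⟨g, hg⟩ := h (fun n => x - n • y) fun n => sub_nonneg.2 (hxy n).le
  have hlow : g + y ∈ lowerBounds (Set.range fun n : ℕ => x - n • y) := by
    rintro _ ⟨n, rfl⟩
    have := hg.1 ⟨n + 1, rfl⟩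
    dsimp only at this ⊢
    rw [succ_nsmul, sub_add_eq_sub_sub] at this
    exact le_sub_iff_add_le.1 this
  exact (lt_add_of_pos_right g hy).not_ge (hg.2 hlow)

theorem surjective_of_forall_isGLB [DenselyOrdered G] [Nontrivial G]
    (h : ∀ s : ℕ → G, (∀ n, 0 ≤ s n) → ∃ g, IsGLB (Set.range s) g) {f : G →+o ℝ}
    (hf : Function.Injective f) : Function.Surjective f := by
  have hmono : StrictMono f := f.monotone'.strictMono_of_injective hf
  have hdense : Dense (Set.range f) := by
    have := AddSubgroup.dense_of_no_min (f : G →+ ℝ).range ?_ ?_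
    · simpa using this
    · obtain ⟨x, hx⟩ := exists_ne (0 : G)
      exact (AddSubgroup.ne_bot_iff_exists_ne_zero).2
        ⟨⟨f x, x, rfl⟩, fun h => hx (hf (by simpa using congrArg Subtype.val h))⟩
    · rintro ⟨_, ⟨⟨x, rfl⟩, hx⟩, hmin⟩
      change 0 < f x at hx
      rw [← map_zero f, hmono.lt_iff_lt] at hx
      obtain ⟨y, hy0, hyx⟩ := exists_between hx
      exact (hmono hyx).not_ge (hmin ⟨⟨y, rfl⟩, by simpa using hmono hy0⟩)
  have hnonneg (r : ℝ) (hr : 0 ≤ r) : r ∈ Set.range f := by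
    choose s hs using fun n : ℕ => hdense.exists_between (lt_add_of_pos_right r
      (Nat.one_div_pos_of_nat (n := n)))
    choose t ht using fun n => (hs n).1
    obtain ⟨g, hg⟩ := h t fun n => by
      rw [← hmono.le_iff_le, map_zero, ht]
      exact hr.trans (hs n).2.1.le
    refine ⟨g, le_antisymm ?_ ?_⟩
    · refine le_of_forall_pos_lt_add fun ε hε => ?_
      obtain ⟨n, hn⟩ := exists_nat_one_div_lt hε
      have := (hs n).2.2
      rw [← ht n] at this
      linarith [hmono.monotone (hg.1 ⟨n, rfl⟩)]
    · by_contra! hlt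
      obtain ⟨_, ⟨y, rfl⟩, hgy, hyr⟩ := hdense.exists_between hlt
      refine (hmono.lt_iff_lt.1 hgy).not_ge (hg.2 ?_)
      rintro _ ⟨n, rfl⟩
      exact hmono.le_iff_le.1 (hyr.trans (ht n ▸ (hs n).2.1)).le
  intro r
  rcases le_total 0 r with hr | hr
  · exact hnonneg r hr
  · obtain ⟨x, hx⟩ := hnonneg (-r) (neg_nonneg.2 hr)
    exact ⟨-x, by rw [map_neg, hx, neg_neg]⟩

theorem nonempty_orderAddIso_real_or_int [IsOrderedAddMonoid G] [Nontrivial G]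
    (h : ∀ s : ℕ → G, (∀ n, 0 ≤ s n) → ∃ g, IsGLB (Set.range s) g) :
    Nonempty (G ≃+o ℝ) ∨ Nonempty (G ≃+o ℤ) := by
  have := archimedean_of_forall_isGLB h
  rcases LinearOrderedAddCommGroup.discrete_or_denselyOrdered G with hZ | hdense
  · exact Or.inr hZ
  left
  obtain ⟨f, hf⟩ := Archimedean.exists_orderAddMonoidHom_real_injective G
  exact ⟨⟨AddEquiv.ofBijective f ⟨hf, surjective_of_forall_isGLB h hf⟩,
    (f.monotone'.strictMono_of_injective hf).le_iff_le⟩⟩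

end ValueGroup

namespace IsDvdValuation

variable {V Γ : Type*} [CommRing V] [IsDomain V] [ValuationRing V]
  [AddCommGroup Γ] [LinearOrder Γ] {w : V → Γ}

theorem isGaussianAlgebra_powerSeries_of_nonempty_orderAddIso (hw : IsDvdValuation w)
    (himage : w '' {a | a ≠ 0} = Set.Ici 0) (hΓ : Nonempty (Γ ≃+o ℝ) ∨ Nonempty (Γ ≃+o ℤ)) :
    IsGaussianAlgebra V V⟦X⟧ := by
  rcases hΓ with hE | hE <;> obtain ⟨E⟩ := hE
  · refine (hw.comp (ι := (E : Γ →+ ℝ)) E.strictMono).isGaussianAlgebra_powerSeries ?_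
    rw [Set.image_comp, himage]
    convert (isClosed_Ici : IsClosed (Set.Ici (0 : ℝ)))
    exact (E.toOrderIso.image_Ici 0).trans (congrArg Set.Ici (map_zero E))
  · refine (hw.comp (ι := (Int.castAddHom ℝ).comp (E : Γ →+ ℤ))
      (Int.cast_strictMono.comp E.strictMono)).isGaussianAlgebra_powerSeries ?_
    rw [Set.image_comp, himage, AddMonoidHom.coe_comp, Set.image_comp]
    exact Int.isClosedEmbedding_coe_real.isClosedMap _ (isClosed_discrete _)

variable [IsOrderedAddMonoid Γ]

theorem exists_isGLB_range (hw : IsDvdValuation w) (himage : w '' {a | a ≠ 0} = Set.Ici 0)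
    (hOR : IsOhmRushAlgebra V V⟦X⟧) (s : ℕ → Γ) (hs : ∀ n, 0 ≤ s n) :
    ∃ g, IsGLB (Set.range s) g := by
  have hpre (g : Γ) (hg : 0 ≤ g) : ∃ a ≠ 0, w a = g := himage.symm.subset hg
  choose a ha0 has using fun n => hpre (s n) (hs n)
  obtain ⟨c, hcdvd, hcgcd⟩ := isOhmRushAlgebra_powerSeries_iff.1 hOR (PowerSeries.mk a)
  simp only [coeff_mk] at hcdvd hcgcd
  have hc0 : c ≠ 0 := by
    rintro rfl
    exact ha0 0 (zero_dvd_iff.1 (hcdvd 0))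
  refine ⟨w c, ?_, fun g hg => ?_⟩
  · rintro _ ⟨n, rfl⟩
    rw [← has n]
    exact (hw.dvd_iff_le hc0 (ha0 n)).1 (hcdvd n)
  rcases lt_or_ge g 0 with hneg | hnonneg
  · exact hneg.le.trans (hw.nonneg hc0)
  obtain ⟨d, hd0, rfl⟩ := hpre g hnonneg
  refine (hw.dvd_iff_le hd0 hc0).1 (hcgcd d fun n => ?_)
  exact (hw.dvd_iff_le hd0 (ha0 n)).2 (has n ▸ hg ⟨n, rfl⟩)

end IsDvdValuation

section FractionRingValuation

variable {V : Type*} [CommRing V] [IsDomain V]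

open Classical in
noncomputable def valueOf {G : Type*} [Zero G] (v : (FractionRing V)ˣ → G) (a : V) : G :=
  if ha : a = 0 then 0
  else v (Units.mk0 (algebraMap V (FractionRing V) a)
    (IsFractionRing.to_map_ne_zero_of_mem_nonZeroDivisors (mem_nonZeroDivisors_of_ne_zero ha)))

theorem valueOf_of_ne_zero {G : Type*} [Zero G] (v : (FractionRing V)ˣ → G) {a : V} (ha : a ≠ 0) :
    valueOf v a = v (Units.mk0 (algebraMap V (FractionRing V) a)
      (IsFractionRing.to_map_ne_zero_of_mem_nonZeroDivisors (mem_nonZeroDivisors_of_ne_zero ha))) :=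
  dif_neg ha

variable {G : Type*} [AddCommGroup G] {v : (FractionRing V)ˣ → G}

theorem valueOf_mul (hmul : ∀ x y, v (x * y) = v x + v y) {a b : V} (ha : a ≠ 0) (hb : b ≠ 0) :
    valueOf v (a * b) = valueOf v a + valueOf v b := by
  rw [valueOf_of_ne_zero v ha, valueOf_of_ne_zero v hb, valueOf_of_ne_zero v (mul_ne_zero ha hb),
    ← hmul]
  congr 1
  ext
  simp

theorem isDvdValuation_valueOf [LinearOrder G] [IsOrderedAddMonoid G]
    (hmul : ∀ x y, v (x * y) = v x + v y)
    (hord : ∀ x, 0 ≤ v x ↔ ∃ a : V, algebraMap V (FractionRing V) a = x) :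
    IsDvdValuation (valueOf v) := by
  refine ⟨valueOf_mul hmul, fun {a b} ha hb => ⟨?_, fun h => ?_⟩⟩
  · rintro ⟨c, rfl⟩
    have hc : c ≠ 0 := right_ne_zero_of_mul hb
    rw [valueOf_mul hmul ha hc, le_add_iff_nonneg_right, valueOf_of_ne_zero v hc]
    exact (hord _).2 ⟨c, rfl⟩
  rw [valueOf_of_ne_zero v ha, valueOf_of_ne_zero v hb] at h
  set ua := Units.mk0 (algebraMap V (FractionRing V) a) _
  set ub := Units.mk0 (algebraMap V (FractionRing V) b) _
  have hquot : v (ub * ua⁻¹) + v ua = v ub := by rw [← hmul, inv_mul_cancel_right]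
  obtain ⟨c, hc⟩ := (hord (ub * ua⁻¹)).1 ((le_add_iff_nonneg_left _).1 (hquot ▸ h))
  refine ⟨c, IsFractionRing.injective V (FractionRing V) ?_⟩
  rw [_root_.map_mul, hc]
  change (ub : FractionRing V) = ua * (ub * ua⁻¹ : (FractionRing V)ˣ)
  rw [← Units.val_mul, mul_comm ub, mul_inv_cancel_left]

theorem image_valueOf [LinearOrder G] (hsurj : Function.Surjective v)
    (hord : ∀ x, 0 ≤ v x ↔ ∃ a : V, algebraMap V (FractionRing V) a = x) :
    valueOf v '' {a | a ≠ 0} = Set.Ici 0 := by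
  ext g
  constructor
  · rintro ⟨a, ha, rfl⟩
    rw [Set.mem_Ici, valueOf_of_ne_zero v ha]
    exact (hord _).2 ⟨a, rfl⟩
  · intro hg
    obtain ⟨x, rfl⟩ := hsurj g
    obtain ⟨a, ha⟩ := (hord x).1 hg
    have ha0 : a ≠ 0 := by
      rintro rfl
      exact x.ne_zero (by simpa using ha.symm)
    refine ⟨a, ha0, ?_⟩
    rw [valueOf_of_ne_zero v ha0]
    congr 1
    ext
    exact ha

end FractionRingValuation

/-- Let `V` be a valuation domain that is not a field, with value group `G` (presented as a
linearly ordered abelian group together with a surjective homomorphic valuation `v` on the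
units of the fraction field, where the nonnegative values are exactly the values of nonzero
elements of `V`).  Then the following are equivalent:
(a) `V[[X]]` is an Ohm-Rush `V`-algebra;
(b) `V[[X]]` is a Gaussian `V`-algebra;
(c) `G` is order-isomorphic (as an ordered additive group) to `ℝ` or to `ℤ`. -/
theorem powerSeries_ohmRush_tfae_of_valuationRing
    (V : Type*) [CommRing V] [IsDomain V] [ValuationRing V] (hV : ¬ IsField V)
    (G : Type*) [AddCommGroup G] [LinearOrder G] [IsOrderedAddMonoid G]
    (v : (FractionRing V)ˣ → G)
    (hsurj : Function.Surjective v)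
    (hmul : ∀ x y : (FractionRing V)ˣ, v (x * y) = v x + v y)
    (hord : ∀ x : (FractionRing V)ˣ,
      0 ≤ v x ↔ ∃ a : V, algebraMap V (FractionRing V) a = (x : FractionRing V)) :
    List.TFAE [IsOhmRushAlgebra V (PowerSeries V),
      IsGaussianAlgebra V (PowerSeries V),
      Nonempty (G ≃+o ℝ) ∨ Nonempty (G ≃+o ℤ)] := by
  have hw := isDvdValuation_valueOf hmul hord
  have himage := image_valueOf hsurj hord
  tfae_have 2 → 1 := fun h => h.1
  tfae_have 1 → 3 := fun h => by
    obtain ⟨a, -, ha⟩ := hw.exists_pos_of_not_isField hV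
    have : Nontrivial G := ⟨⟨_, _, ha.ne'⟩⟩
    exact nonempty_orderAddIso_real_or_int (hw.exists_isGLB_range himage h)
  tfae_have 3 → 2 := hw.isGaussianAlgebra_powerSeries_of_nonempty_orderAddIso himage
  tfae_finish
end

section
/- Let R be a commutative ring. Then R[[X]] is an Ohm-Rush R-algebra if and only if for every countably generated ideal I of R there is a unique smallest finitely generated ideal J of R with I ⊆ J. In that case, for every f ∈ R[[X]] with c(f) = I, one has orc(f) = J. -/
/-- The `common-sense' content of a power series: the ideal generated by its
coefficients. -/
def psContent (R : Type*) [CommRing R] (f : PowerSeries R) : Ideal R :=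
  Ideal.span (Set.range fun n => PowerSeries.coeff (R := R) n f)

/-! An ideal `I` extended to `R⟦X⟧` is the union of the extensions of its finitely generated
subideals, and for finitely generated `J` one has `f ∈ J·R⟦X⟧` iff `c(f) ⊆ J`. So `orc(f)` is the
intersection of the finitely generated ideals containing `c(f)`, and `f ∈ orc(f)·R⟦X⟧` says exactly
that this intersection is itself one of them. The countably generated ideals are precisely the
contents of power series. -/

theorem Ideal.exists_fg_le_and_mem_map {A B : Type*} [CommSemiring A] [Semiring B] (φ : A →+* B)
    {I : Ideal A} {b : B} (hb : b ∈ I.map φ) : ∃ J : Ideal A, J.FG ∧ J ≤ I ∧ b ∈ J.map φ := by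
  classical
  obtain ⟨T, hTI, hbT⟩ := Submodule.mem_span_finite_of_mem_span hb
  obtain ⟨T', hT'I, rfl⟩ := Finset.subset_set_image_iff.1 hTI
  refine ⟨Ideal.span T', ⟨T', rfl⟩, Ideal.span_le.2 hT'I, ?_⟩
  rwa [Ideal.map_span, ← Finset.coe_image]

namespace PowerSeries

variable {R : Type*} [CommRing R]

theorem psContent_le_iff {f : R⟦X⟧} {I : Ideal R} :
    psContent R f ≤ I ↔ ∀ n, coeff n f ∈ I := by
  simp [psContent, Ideal.span_le, Set.range_subset_iff]

theorem psContent_mk (g : ℕ → R) : psContent R (mk g) = Ideal.span (Set.range g) := by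
  simp only [psContent, coeff_mk]

theorem exists_psContent_eq_span {s : Set R} (hs : s.Countable) :
    ∃ f : R⟦X⟧, psContent R f = Ideal.span s := by
  obtain ⟨g, hg⟩ := (hs.insert 0).exists_eq_range (Set.insert_nonempty 0 s)
  exact ⟨mk g, by rw [psContent_mk, ← hg, Ideal.span_insert_zero]⟩

theorem psContent_le_of_mem_map {I : Ideal R} {f : R⟦X⟧}
    (hf : f ∈ I.map (algebraMap R R⟦X⟧)) : psContent R f ≤ I := by
  have hker : I.map (algebraMap R R⟦X⟧) ≤ RingHom.ker (map (Ideal.Quotient.mk I)) :=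
    Ideal.map_le_iff_le_comap.2 fun a ha => by
      simp [Ideal.Quotient.eq_zero_iff_mem.2 ha]
  refine psContent_le_iff.2 fun n => Ideal.Quotient.eq_zero_iff_mem.1 ?_
  simpa using congrArg (coeff n) (hker hf)

theorem mem_map_of_psContent_le {I : Ideal R} (hI : I.FG) {f : R⟦X⟧}
    (hf : psContent R f ≤ I) : f ∈ I.map (algebraMap R R⟦X⟧) := by
  obtain ⟨k, v, rfl⟩ := Submodule.fg_iff_exists_fin_generating_family.1 hI
  choose c hc using fun n => Ideal.mem_span_range_iff_exists_fun.1 (psContent_le_iff.1 hf n)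
  have hf : f = ∑ i, mk (fun n => c n i) * C (v i) := by
    ext n
    simp [coeff_mul_C, hc]
  rw [hf]
  exact Ideal.sum_mem _ fun i _ =>
    Ideal.mul_mem_left _ _ (Ideal.mem_map_of_mem _ (Ideal.subset_span ⟨i, rfl⟩))

theorem mem_map_algebraMap_iff {I : Ideal R} {f : R⟦X⟧} :
    f ∈ I.map (algebraMap R R⟦X⟧) ↔ ∃ J : Ideal R, J.FG ∧ J ≤ I ∧ psContent R f ≤ J := by
  refine ⟨fun hf => ?_, fun ⟨J, hJ, hJI, hfJ⟩ => Ideal.map_mono hJI (mem_map_of_psContent_le hJ hfJ)⟩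
  obtain ⟨J, hJ, hJI, hfJ⟩ := Ideal.exists_fg_le_and_mem_map _ hf
  exact ⟨J, hJ, hJI, psContent_le_of_mem_map hfJ⟩

theorem orc_le_of_fg {I : Ideal R} {f : R⟦X⟧} (hI : I.FG) (hf : psContent R f ≤ I) :
    orc R R⟦X⟧ f ≤ I :=
  sInf_le (mem_map_of_psContent_le hI hf)

theorem le_orc_of_forall_fg {J : Ideal R} {f : R⟦X⟧}
    (hJ : ∀ J' : Ideal R, J'.FG → psContent R f ≤ J' → J ≤ J') : J ≤ orc R R⟦X⟧ f :=
  le_sInf fun _ hI =>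
    let ⟨J', hJ', hJ'I, hfJ'⟩ := mem_map_algebraMap_iff.1 hI
    (hJ J' hJ' hfJ').trans hJ'I

theorem orc_eq_of_least_fg {J : Ideal R} {f : R⟦X⟧}
    (hJ : J.FG ∧ psContent R f ≤ J ∧ ∀ J' : Ideal R, J'.FG → psContent R f ≤ J' → J ≤ J') :
    orc R R⟦X⟧ f = J :=
  (orc_le_of_fg hJ.1 hJ.2.1).antisymm (le_orc_of_forall_fg hJ.2.2)

theorem mem_map_orc_iff {f : R⟦X⟧} :
    f ∈ (orc R R⟦X⟧ f).map (algebraMap R R⟦X⟧) ↔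
      ∃ J : Ideal R, J.FG ∧ psContent R f ≤ J ∧
        ∀ J' : Ideal R, J'.FG → psContent R f ≤ J' → J ≤ J' := by
  refine ⟨fun hf => ?_, fun ⟨J, hJ⟩ => ?_⟩
  · obtain ⟨J, hJ, hJf, hfJ⟩ := mem_map_algebraMap_iff.1 hf
    exact ⟨J, hJ, hfJ, fun J' hJ' hfJ' => hJf.trans (orc_le_of_fg hJ' hfJ')⟩
  · rw [orc_eq_of_least_fg hJ]
    exact mem_map_of_psContent_le hJ.1 hJ.2.1

end PowerSeries

open PowerSeries

/-- `R[[X]]` is an Ohm-Rush `R`-algebra iff every countably generated ideal `I` of `R` is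
contained in a unique smallest finitely generated ideal `J`; in that case, for every
`f ∈ R[[X]]`, the smallest finitely generated ideal containing `c(f)` is `orc(f)`. -/
theorem powerSeries_isOhmRushAlgebra_iff_smallest_fg (R : Type*) [CommRing R] :
    (IsOhmRushAlgebra R (PowerSeries R) ↔
      ∀ I : Ideal R, (∃ s : Set R, s.Countable ∧ I = Ideal.span s) →
        ∃! J : Ideal R, J.FG ∧ I ≤ J ∧ ∀ J' : Ideal R, J'.FG → I ≤ J' → J ≤ J') ∧
    (IsOhmRushAlgebra R (PowerSeries R) →
      ∀ (f : PowerSeries R) (J : Ideal R),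
        (J.FG ∧ psContent R f ≤ J ∧ ∀ J' : Ideal R, J'.FG → psContent R f ≤ J' → J ≤ J') →
        orc R (PowerSeries R) f = J) := by
  refine ⟨⟨fun h I ⟨s, hs, hI⟩ => ?_, fun h f => ?_⟩, fun _ _ _ => orc_eq_of_least_fg⟩
  · obtain ⟨f, rfl⟩ : ∃ f : R⟦X⟧, psContent R f = I := hI ▸ exists_psContent_eq_span hs
    obtain ⟨J, hJ⟩ := mem_map_orc_iff.1 (h f)
    exact ⟨J, hJ, fun J' hJ' => (hJ'.2.2 J hJ.1 hJ.2.1).antisymm (hJ.2.2 J' hJ'.1 hJ'.2.1)⟩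
  · obtain ⟨J, hJ, -⟩ := h (psContent R f) ⟨_, Set.countable_range _, rfl⟩
    exact mem_map_orc_iff.2 ⟨J, hJ⟩
end
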